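/- Let x, y, X, Y be finite configurations over ℤ^d, let 𝒜 = {s ∈ ℤ^d : X(s) ≠ Y(s)}, and assume 𝒜 is nonempty. Let 𝒩 ⊆ ℤ^d be finite and suppose x(b) ≠ y(b) for some b ∉ 𝒜 + 𝒩. Set φ± = (e_x ± e_y)/√2 and ψ± = (e_X ± e_Y)/√2. Then the pure states |φ+⟩⟨φ+| and |φ−⟩⟨φ−| have equal reductions to 𝒜 + 𝒩, while the pure states |ψ+⟩⟨ψ+| and |ψ−⟩⟨ψ−| have different reductions to 𝒜. -/

import Mathlib

open scoped Pointwise ComplexConjugate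
open Classical

noncomputable section

variable (d : ℕ) (A : Type) (q : A)

/-- Finite configurations over `ℤ^d`. -/
def Cf : Type := {c : (Fin d → ℤ) → A // {i | c i ≠ q}.Finite}

/-- Restrictions to `S` of finite configurations. -/
def Rst (S : Set (Fin d → ℤ)) : Type := {u : S → A // {i | u i ≠ q}.Finite}

variable {d A q}

def restr (S : Set (Fin d → ℤ)) (c : Cf d A q) : Rst d A q S :=
  ⟨fun i => c.1 i, c.2.preimage Subtype.val_injective.injOn⟩

def glue {S : Set (Fin d → ℤ)} (u : Rst d A q S) (v : Rst d A q Sᶜ) : Cf d A q :=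
  ⟨fun i => if h : i ∈ S then u.1 ⟨i, h⟩ else v.1 ⟨i, h⟩, by
    apply Set.Finite.subset ((u.2.image Subtype.val).union (v.2.image Subtype.val))
    intro i hi
    by_cases h : i ∈ S
    · exact Or.inl ⟨⟨i, h⟩, by simpa [h] using hi, rfl⟩
    · exact Or.inr ⟨⟨i, h⟩, by simpa [h] using hi, rfl⟩⟩

/-- The Hilbert space `ℓ²(C_f, ℂ)`. -/
abbrev Hd (d : ℕ) (A : Type) (q : A) : Type := lp (fun _ : Cf d A q => ℂ) 2

/-- Canonical basis vector. -/
def e (c : Cf d A q) : Hd d A q := lp.single 2 c 1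

/-- A state: countable convex combination of an orthonormal family of pure states. -/
structure State (H : Type) [NormedAddCommGroup H] [InnerProductSpace ℂ H] where
  ψ : ℕ → H
  p : ℕ → ℝ
  nonneg : ∀ k, 0 ≤ p k
  sum_one : HasSum p 1
  ortho : ∀ j k, p j ≠ 0 → p k ≠ 0 → (inner ℂ (ψ j) (ψ k) : ℂ) = if j = k then 1 else 0

/-- Reduction to `S` of the mixture of the family `ψ` with weights `p`. -/
def redFam (p : ℕ → ℝ) (ψ : ℕ → Hd d A q) (S : Set (Fin d → ℤ)) :
    Rst d A q S → Rst d A q S → ℂ := fun u u' =>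
  ∑' k, (p k : ℂ) * ∑' v : Rst d A q Sᶜ, (ψ k) (glue u v) * conj ((ψ k) (glue u' v))

def reduct (ρ : State (Hd d A q)) (S : Set (Fin d → ℤ)) :
    Rst d A q S → Rst d A q S → ℂ := redFam ρ.p ρ.ψ S

def redApply (G : Hd d A q →L[ℂ] Hd d A q) (ρ : State (Hd d A q)) (S : Set (Fin d → ℤ)) :
    Rst d A q S → Rst d A q S → ℂ := redFam ρ.p (fun k => G (ρ.ψ k)) S

/-- `G` is local at `𝒜` with neighbourhood `𝒩`. -/
def LocalAt (G : Hd d A q →L[ℂ] Hd d A q) (𝒜 𝒩 : Set (Fin d → ℤ)) : Prop :=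
  ∀ ρ ρ' : State (Hd d A q), reduct ρ (𝒜 + 𝒩) = reduct ρ' (𝒜 + 𝒩) →
    redApply G ρ 𝒜 = redApply G ρ' 𝒜

/-- `F` is a cellular automaton. -/
def IsCA (F : Cf d A q → Cf d A q) : Prop :=
  ∃ (N : Set (Fin d → ℤ)) (_ : N.Finite) (f : (N → A) → A),
    f (fun _ => q) = q ∧ ∀ c i, (F c).1 i = f (fun n => c.1 (i + n.1))

/-- `F` is reversible. -/
def Reversible (F : Cf d A q → Cf d A q) : Prop :=
  ∃ NI : Set (Fin d → ℤ), NI.Finite ∧ ∀ x y : Cf d A q, ∀ i : Fin d → ℤ,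
    (∀ n ∈ NI, (F x).1 (i + n) = (F y).1 (i + n)) → x.1 i = y.1 i


/-- Reduction to `S` of the pure state `|ψ⟩⟨ψ|`. -/
def pureRed (ψ : Hd d A q) (S : Set (Fin d → ℤ)) :
    Rst d A q S → Rst d A q S → ℂ := fun u u' =>
  ∑' v : Rst d A q Sᶜ, (ψ) (glue u v) * conj ((ψ) (glue u' v))

/-! In the reduction of `|a e_x + b e_y⟩⟨a e_x + b e_y|` to `S`, the cross terms `a conj b` and
`b conj a` survive the partial trace only if `x` and `y` agree outside `S`. Hence when `x` and `y`
differ outside `S` the reduction depends on `|a|` and `|b|` alone, and the relative sign of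
`φ±` is invisible; when they differ only inside `S`, the entry of the reduction at
`(x|_S, y|_S)` is `a conj b`, which distinguishes `ψ+` from `ψ-`. -/

lemma e_apply (c c' : Cf d A q) : (e c : ∀ _ : Cf d A q, ℂ) c' = if c' = c then 1 else 0 := by
  simp [e, lp.single_apply, Pi.single_apply]

lemma smul_e_add_smul_e_apply (a b : ℂ) (x y c : Cf d A q) :
    ((a • e x + b • e y : Hd d A q) : ∀ _ : Cf d A q, ℂ) c =
      (if c = x then a else 0) + (if c = y then b else 0) := by
  rw [lp.coeFn_add, Pi.add_apply, lp.coeFn_smul, lp.coeFn_smul, Pi.smul_apply, Pi.smul_apply,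
    e_apply, e_apply]
  simp

lemma restr_eq_restr_iff {S : Set (Fin d → ℤ)} {c c' : Cf d A q} :
    restr S c = restr S c' ↔ ∀ i ∈ S, c.1 i = c'.1 i := by
  refine ⟨fun h i hi => congrFun (congrArg Subtype.val h) ⟨i, hi⟩, fun h => ?_⟩
  exact Subtype.ext (funext fun i => h i i.2)

lemma restr_glue_left {S : Set (Fin d → ℤ)} (u : Rst d A q S) (v : Rst d A q Sᶜ) :
    restr S (glue u v) = u := by
  apply Subtype.ext; funext i
  simp [restr, glue]

lemma restr_glue_right {S : Set (Fin d → ℤ)} (u : Rst d A q S) (v : Rst d A q Sᶜ) :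
    restr Sᶜ (glue u v) = v := by
  apply Subtype.ext; funext i
  have : (i : Fin d → ℤ) ∉ S := i.2
  simp [restr, glue, this]

lemma glue_restr (S : Set (Fin d → ℤ)) (c : Cf d A q) :
    glue (restr S c) (restr Sᶜ c) = c := by
  apply Subtype.ext; funext i
  by_cases i ∈ S <;> simp_all [glue, restr]

lemma glue_eq_iff {S : Set (Fin d → ℤ)} {u : Rst d A q S} {v : Rst d A q Sᶜ} {c : Cf d A q} :
    glue u v = c ↔ u = restr S c ∧ v = restr Sᶜ c := by
  constructor
  · rintro rfl; exact ⟨(restr_glue_left u v).symm, (restr_glue_right u v).symm⟩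
  · rintro ⟨rfl, rfl⟩; exact glue_restr S c

theorem pureRed_smul_e_add_smul_e_of_norm_eq {S : Set (Fin d → ℤ)} {x y : Cf d A q}
    (hxy : restr Sᶜ x ≠ restr Sᶜ y) (a : ℂ) {b b' : ℂ} (hb : ‖b‖ = ‖b'‖) :
    pureRed (a • e x + b • e y) S = pureRed (a • e x + b' • e y) S := by
  funext u u'
  refine tsum_congr fun v => ?_
  have no_cross : ∀ w w' : Rst d A q S, ¬(glue w v = x ∧ glue w' v = y) := fun w w' h =>
    hxy ((glue_eq_iff.mp h.1).2.symm.trans (glue_eq_iff.mp h.2).2)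
  have no_cross_uu' := no_cross u u'
  have no_cross_u'u := no_cross u' u
  simp only [smul_e_add_smul_e_apply]
  split_ifs <;> simp_all [Complex.mul_conj']

theorem pureRed_smul_e_add_smul_e_restr_restr {S : Set (Fin d → ℤ)} {x y : Cf d A q}
    (hS : restr S x ≠ restr S y) (hSc : restr Sᶜ x = restr Sᶜ y) (a b : ℂ) :
    pureRed (a • e x + b • e y) S (restr S x) (restr S y) = a * conj b := by
  have hxy : x ≠ y := fun h => hS (h ▸ rfl)
  have hx : glue (restr S x) (restr Sᶜ x) = x := glue_restr S x
  have hy : glue (restr S y) (restr Sᶜ x) = y := hSc ▸ glue_restr S y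
  unfold pureRed
  rw [tsum_eq_single (restr Sᶜ x) fun v hv => ?_]
  · simp [smul_e_add_smul_e_apply, hx, hy, hxy, hxy.symm]
  · have h1 : glue (restr S x) v ≠ x := fun h => hv (glue_eq_iff.mp h).2
    have h2 : glue (restr S x) v ≠ y := fun h => hS (glue_eq_iff.mp h).1
    simp [smul_e_add_smul_e_apply, h1, h2]

theorem pure_states_reductions_general
    {d : ℕ} {A : Type} {q : A}
    (x y X Y : Cf d A q) (𝒜 : Set (Fin d → ℤ)) (h𝒜 : 𝒜 = {s | X.1 s ≠ Y.1 s})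
    (h𝒜ne : 𝒜.Nonempty) (𝒩 : Set (Fin d → ℤ))
    (hxy : ∃ b ∉ 𝒜 + 𝒩, x.1 b ≠ y.1 b) :
    pureRed (((Real.sqrt 2 : ℂ))⁻¹ • (e x + e y)) (𝒜 + 𝒩) =
        pureRed (((Real.sqrt 2 : ℂ))⁻¹ • (e x - e y)) (𝒜 + 𝒩) ∧
      pureRed (((Real.sqrt 2 : ℂ))⁻¹ • (e X + e Y)) 𝒜 ≠
        pureRed (((Real.sqrt 2 : ℂ))⁻¹ • (e X - e Y)) 𝒜 := by
  set α : ℂ := (Real.sqrt 2 : ℂ)⁻¹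
  have hα : α ≠ 0 := by simp [α]
  have smul_sub_eq : ∀ z w : Cf d A q, α • (e z - e w) = α • e z + (-α) • e w := fun z w => by
    rw [smul_sub, sub_eq_add_neg, neg_smul]
  obtain ⟨b, hb, hxb⟩ := hxy
  obtain ⟨s, hs⟩ := h𝒜ne
  refine ⟨?_, fun h => ?_⟩
  · rw [smul_add, smul_sub_eq]
    exact pureRed_smul_e_add_smul_e_of_norm_eq (fun h => hxb (restr_eq_restr_iff.mp h b hb)) α
      (norm_neg α).symm
  · have hS : restr 𝒜 X ≠ restr 𝒜 Y := fun h => (h𝒜 ▸ hs : s ∈ {s | X.1 s ≠ Y.1 s})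
      (restr_eq_restr_iff.mp h s hs)
    have hSc : restr 𝒜ᶜ X = restr 𝒜ᶜ Y :=
      restr_eq_restr_iff.mpr fun i hi => not_not.mp (h𝒜 ▸ hi : i ∉ {s | X.1 s ≠ Y.1 s})
    have entry := congrFun₂ h (restr 𝒜 X) (restr 𝒜 Y)
    rw [smul_add, smul_sub_eq, pureRed_smul_e_add_smul_e_restr_restr hS hSc,
      pureRed_smul_e_add_smul_e_restr_restr hS hSc, map_neg, mul_neg, eq_neg_iff_add_eq_zero,
      ← two_mul] at entry
    simp [hα] at entry

/-- with `𝒜 = {s | X s ≠ Y s}` nonempty, `𝒩` finite, and `x, y` differing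
somewhere outside `𝒜 + 𝒩`, the pure states `|φ±⟩⟨φ±|` (for `φ± = (e_x ± e_y)/√2`) have
equal reductions to `𝒜 + 𝒩`, while `|ψ±⟩⟨ψ±|` (for `ψ± = (e_X ± e_Y)/√2`) have different
reductions to `𝒜`. -/
theorem pure_states_reductions
    {d : ℕ} (hd : 0 < d) {A : Type} [Fintype A] {q : A}
    (x y X Y : Cf d A q) (𝒜 : Set (Fin d → ℤ)) (h𝒜 : 𝒜 = {s | X.1 s ≠ Y.1 s})
    (h𝒜ne : 𝒜.Nonempty) (𝒩 : Set (Fin d → ℤ)) (h𝒩 : 𝒩.Finite)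
    (hxy : ∃ b ∉ 𝒜 + 𝒩, x.1 b ≠ y.1 b) :
    pureRed (((Real.sqrt 2 : ℂ))⁻¹ • (e x + e y)) (𝒜 + 𝒩) =
        pureRed (((Real.sqrt 2 : ℂ))⁻¹ • (e x - e y)) (𝒜 + 𝒩) ∧
      pureRed (((Real.sqrt 2 : ℂ))⁻¹ • (e X + e Y)) 𝒜 ≠
        pureRed (((Real.sqrt 2 : ℂ))⁻¹ • (e X - e Y)) 𝒜 :=
  pure_states_reductions_general x y X Y 𝒜 h𝒜 h𝒜ne 𝒩 hxy
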